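/- arXiv:math-ph/0604033 — 4 statements merged into one kernel-verified Lean document; each statement's English description precedes it below -/
import Mathlib

section
/- Let A be a 2×2 complex matrix with entries a_{ij} (i,j = 1,2) such that Im A is positive definite. Then the integral over (v₁,v₂) ∈ ℝ² of det(Im[(diag(v₁,v₂) − A)⁻¹]) equals π² · det(Im A) / √( (det Im A)² + (1/2)(det Im A)(|a₁₂|² + |a₂₁|²) + (1/16)(|a₁₂|² − |a₂₁|²)² ). -/
/-!
With `M = diag(v) - A` and `diag(v)` Hermitian, `Im (M⁻¹) = M⁻¹ (Im A) M⁻¹ᴴ`, so the integrand is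
`det (Im A) / |det M|²` with `det M = (v₀ - a₀₀)(v₁ - a₁₁) - a₀₁a₁₀`. For fixed `v₀` this is
`|u v₁ - w|²`, a Cauchy density in `v₁` up to the factor `π / Im (ū w)`, and `Im (ū w)` is a
quadratic in `v₀` with positive leading coefficient and positive discriminant `4 R`, where `R` is
the radicand of the statement; its reciprocal integrates to `2π / √(4 R)`.
-/

open MeasureTheory Matrix Real ComplexOrder

/-- The (operator) imaginary part of a complex matrix: `Im C = (C - Cᴴ)/(2i)`. -/
noncomputable def matIm {m : Type*} (C : Matrix m m ℂ) : Matrix m m ℂ :=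
  (2 * Complex.I)⁻¹ • (C - Cᴴ)

open ComplexConjugate ProbabilityTheory

section MatIm

variable {n : Type*}

lemma matIm_apply (C : Matrix n n ℂ) (i j : n) :
    matIm C i j = (C i j - conj (C j i)) / (2 * Complex.I) := by
  simp [matIm, div_eq_inv_mul]

lemma matIm_apply_self (C : Matrix n n ℂ) (i : n) : matIm C i i = ((C i i).im : ℂ) := by
  rw [matIm_apply, Complex.sub_conj]
  push_cast
  field_simp

lemma isHermitian_matIm (C : Matrix n n ℂ) : (matIm C).IsHermitian := by
  rw [IsHermitian, matIm, conjTranspose_smul, conjTranspose_sub, conjTranspose_conjTranspose,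
    star_inv₀, star_mul', Complex.star_def, Complex.conj_I, map_ofNat, ← neg_sub C, smul_neg,
    ← neg_smul, mul_neg, inv_neg, neg_neg, mul_comm]

lemma matIm_sub_of_isHermitian {H : Matrix n n ℂ} (hH : H.IsHermitian) (C : Matrix n n ℂ) :
    matIm (H - C) = -matIm C := by
  simp only [matIm, conjTranspose_sub, hH.eq, ← smul_neg]
  abel_nf

lemma isHermitian_diagonal_ofReal [DecidableEq n] (v : n → ℝ) :
    (diagonal fun i => (v i : ℂ)).IsHermitian :=
  isHermitian_diagonal_iff.2 fun i => Complex.conj_ofReal (v i)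

variable [Fintype n] [DecidableEq n]

-- A kernel vector `x` of `M` would give `xᴴ (Im M) x = Im (xᴴ M x) = 0`.
lemma det_ne_zero_of_posDef_neg_matIm {M : Matrix n n ℂ} (h : (-matIm M).PosDef) : M.det ≠ 0 := by
  intro hdet
  obtain ⟨x, hx, hMx⟩ := exists_mulVec_eq_zero_iff.2 hdet
  have hMHx : star x ⬝ᵥ Mᴴ *ᵥ x = 0 := by
    rw [dotProduct_mulVec, vecMul_conjTranspose, star_star, hMx, star_zero, zero_dotProduct]
  have := h.dotProduct_mulVec_pos hx
  simp [matIm, sub_mulVec, smul_mulVec, hMx, hMHx] at this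

lemma matIm_inv {M : Matrix n n ℂ} (hM : IsUnit M.det) :
    matIm M⁻¹ = -(M⁻¹ * matIm M * M⁻¹ᴴ) := by
  have hMH : IsUnit Mᴴ.det := by simpa [det_conjTranspose] using hM.star
  have key : M⁻¹ - M⁻¹ᴴ = -(M⁻¹ * (M - Mᴴ) * M⁻¹ᴴ) := by
    rw [conjTranspose_nonsing_inv, Matrix.mul_sub, Matrix.sub_mul, Matrix.mul_assoc M⁻¹ Mᴴ,
      mul_nonsing_inv _ hMH, nonsing_inv_mul _ hM]
    simp
  rw [matIm, key, matIm, Matrix.mul_smul, Matrix.smul_mul, smul_neg]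

lemma det_matIm_inv_sub_of_isHermitian {H A : Matrix n n ℂ} (hH : H.IsHermitian)
    (hA : (matIm A).PosDef) :
    (matIm (H - A)⁻¹).det = (matIm A).det / Complex.normSq (H - A).det := by
  have hIm : -matIm (H - A) = matIm A := by rw [matIm_sub_of_isHermitian hH, neg_neg]
  have hdet : (H - A).det ≠ 0 := det_ne_zero_of_posDef_neg_matIm (hIm ▸ hA)
  rw [matIm_inv (isUnit_iff_ne_zero.2 hdet), ← Matrix.neg_mul, ← Matrix.mul_neg, hIm, det_mul,
    det_mul, det_conjTranspose, det_nonsing_inv, Ring.inverse_eq_inv,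
    Complex.normSq_eq_conj_mul_self, star_inv₀, Complex.star_def]
  field_simp

end MatIm

lemma inv_normSq_ofReal_sub_eq_cauchyPDFReal {z : ℂ} (hz : z.im ≠ 0) (x : ℝ) :
    (Complex.normSq (x - z))⁻¹ = π / |z.im| * cauchyPDFReal z.re (Real.nnabs z.im) x := by
  have habs : 0 < |z.im| := abs_pos.2 hz
  rw [cauchyPDFReal_def, Real.coe_nnabs, Complex.normSq_apply]
  simp only [Complex.sub_re, Complex.ofReal_re, Complex.sub_im, Complex.ofReal_im, zero_sub,
    neg_mul_neg, sq_abs]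
  field_simp

lemma integral_inv_normSq_ofReal_sub {z : ℂ} (hz : z.im ≠ 0) :
    ∫ x : ℝ, (Complex.normSq (x - z))⁻¹ = π / |z.im| := by
  simp_rw [inv_normSq_ofReal_sub_eq_cauchyPDFReal hz]
  rw [integral_const_mul, integral_cauchyPDFReal_eq_one _ (by simpa using hz), mul_one]

lemma integral_inv_normSq_mul_ofReal_sub {u w : ℂ} (h : (conj u * w).im ≠ 0) :
    ∫ y : ℝ, (Complex.normSq (u * y - w))⁻¹ = π / |(conj u * w).im| := by
  have hu : u ≠ 0 := by rintro rfl; simp at h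
  have hnu : 0 < Complex.normSq u := Complex.normSq_pos.2 hu
  have him : (w / u).im = (conj u * w).im / Complex.normSq u := by
    simp only [Complex.div_im, Complex.mul_im, Complex.conj_re, Complex.conj_im]
    ring
  have hfactor : ∀ y : ℝ, u * y - w = u * (y - w / u) := fun y => by field_simp
  calc ∫ y : ℝ, (Complex.normSq (u * y - w))⁻¹
      = ∫ y : ℝ, (Complex.normSq u)⁻¹ * (Complex.normSq (y - w / u))⁻¹ := by
        simp_rw [hfactor, Complex.normSq_mul, mul_inv]
    _ = π / |(conj u * w).im| := by
        rw [integral_const_mul, integral_inv_normSq_ofReal_sub (by rw [him]; positivity), him,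
          abs_div, abs_of_pos hnu]
        field_simp

lemma quadratic_eq_mul_normSq {a b c : ℝ} (ha : a ≠ 0) (hd : 0 ≤ 4 * a * c - b ^ 2) (x : ℝ) :
    a * x ^ 2 + b * x + c
      = a * Complex.normSq (x - ⟨-b / (2 * a), √(4 * a * c - b ^ 2) / (2 * a)⟩) := by
  have hs := Real.sq_sqrt hd
  set s := √(4 * a * c - b ^ 2)
  rw [Complex.normSq_apply]
  simp only [Complex.sub_re, Complex.ofReal_re, Complex.sub_im, Complex.ofReal_im]
  field_simp
  linear_combination -hs

lemma integral_inv_quadratic {a b c : ℝ} (ha : 0 < a) (hd : 0 < 4 * a * c - b ^ 2) :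
    ∫ x : ℝ, (a * x ^ 2 + b * x + c)⁻¹ = 2 * π / √(4 * a * c - b ^ 2) := by
  have hs : 0 < √(4 * a * c - b ^ 2) := Real.sqrt_pos.2 hd
  simp_rw [quadratic_eq_mul_normSq ha.ne' hd.le, mul_inv]
  rw [integral_const_mul, integral_inv_normSq_ofReal_sub (div_pos hs (by positivity)).ne']
  simp only [abs_div, abs_of_pos hs, abs_of_pos (by positivity : (0:ℝ) < 2 * a)]
  field_simp

theorem integral_inv_normSq_mul_sub_sub {a d p : ℂ} (hd : 0 < d.im)
    (hD : 0 < 4 * a.im * d.im * (a.im * d.im + p.re) - p.im ^ 2) :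
    ∫ z : ℝ × ℝ, (Complex.normSq ((z.1 - a) * (z.2 - d) - p))⁻¹
      = 2 * π ^ 2 / √(4 * a.im * d.im * (a.im * d.im + p.re) - p.im ^ 2) := by
  set g : ℝ → ℝ := fun t => d.im * t ^ 2 + p.im * t + (d.im * a.im ^ 2 + a.im * p.re)
  have hg_pos : ∀ t, 0 < g t := fun t => by nlinarith [sq_nonneg (2 * d.im * t + p.im)]
  have hg_im : ∀ x : ℝ, (conj ((x : ℂ) - a) * ((x - a) * d + p)).im = g (x - a.re) := by
    intro x
    simp only [g, Complex.mul_im, Complex.mul_re, Complex.add_im, Complex.add_re, Complex.conj_re,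
      Complex.conj_im, Complex.sub_re, Complex.sub_im, Complex.ofReal_re, Complex.ofReal_im]
    ring
  have hinner : ∀ x : ℝ,
      ∫ y : ℝ, (Complex.normSq ((x - a) * (y - d) - p))⁻¹ = π / g (x - a.re) := by
    intro x
    have h := integral_inv_normSq_mul_ofReal_sub (u := x - a) (w := (x - a) * d + p)
      (by rw [hg_im]; exact (hg_pos _).ne')
    rw [hg_im, abs_of_pos (hg_pos _)] at h
    simpa only [mul_sub, sub_sub] using h
  have houter : ∫ x : ℝ, π / g (x - a.re)
      = 2 * π ^ 2 / √(4 * a.im * d.im * (a.im * d.im + p.re) - p.im ^ 2) := by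
    simp_rw [div_eq_mul_inv π]
    rw [integral_const_mul, integral_sub_right_eq_self (fun t => (g t)⁻¹),
      integral_inv_quadratic hd (by linarith)]
    ring_nf
  have hmeas : AEStronglyMeasurable
      (fun z : ℝ × ℝ => (Complex.normSq ((z.1 - a) * (z.2 - d) - p))⁻¹) (volume.prod volume) := by
    fun_prop
  have hint := (integrable_prod_iff hmeas).2
    ⟨ae_of_all _ fun x => Integrable.of_integral_ne_zero <| by
        rw [hinner]; exact (div_pos pi_pos (hg_pos _)).ne',
     by simp_rw [Real.norm_of_nonneg (inv_nonneg.2 (Complex.normSq_nonneg _)), hinner]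
        exact Integrable.of_integral_ne_zero (by rw [houter]; positivity)⟩
  rw [Measure.volume_eq_prod, integral_prod _ hint]
  simp_rw [hinner]
  exact houter

lemma re_det_matIm_fin_two (A : Matrix (Fin 2) (Fin 2) ℂ) :
    ((matIm A).det).re
      = (A 0 0).im * (A 1 1).im - Complex.normSq (A 0 1 - conj (A 1 0)) / 4 := by
  rw [det_fin_two, matIm_apply_self, matIm_apply_self, ← (isHermitian_matIm A).apply 1 0,
    Complex.star_def, Complex.mul_conj, matIm_apply, Complex.normSq_div, Complex.normSq_mul,
    Complex.normSq_I, Complex.normSq_ofNat]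
  norm_cast

lemma four_mul_radicand_fin_two (A : Matrix (Fin 2) (Fin 2) ℂ) :
    4 * (((matIm A).det).re ^ 2
          + (1/2) * ((matIm A).det).re * (‖A 0 1‖ ^ 2 + ‖A 1 0‖ ^ 2)
          + (1/16) * (‖A 0 1‖ ^ 2 - ‖A 1 0‖ ^ 2) ^ 2)
      = 4 * (A 0 0).im * (A 1 1).im * ((A 0 0).im * (A 1 1).im + (A 0 1 * A 1 0).re)
          - (A 0 1 * A 1 0).im ^ 2 := by
  rw [re_det_matIm_fin_two, Complex.sq_norm, Complex.sq_norm]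
  simp only [Complex.normSq_apply, Complex.mul_re, Complex.mul_im, Complex.sub_re, Complex.sub_im,
    Complex.conj_re, Complex.conj_im]
  ring

theorem integral_det_im_inv_two_by_two
    (A : Matrix (Fin 2) (Fin 2) ℂ) (hA : (matIm A).PosDef) :
    (∫ v : Fin 2 → ℝ,
        ((matIm ((Matrix.diagonal (fun i => (v i : ℂ)) - A)⁻¹)).det).re)
      = π ^ 2 * ((matIm A).det).re /
        Real.sqrt (((matIm A).det).re ^ 2
          + (1/2) * ((matIm A).det).re *
              (‖A 0 1‖ ^ 2 + ‖A 1 0‖ ^ 2)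
          + (1/16) * (‖A 0 1‖ ^ 2 - ‖A 1 0‖ ^ 2) ^ 2) := by
  have hdisc := four_mul_radicand_fin_two A
  set C := ((matIm A).det).re
  set R := C ^ 2 + (1/2) * C * (‖A 0 1‖ ^ 2 + ‖A 1 0‖ ^ 2)
    + (1/16) * (‖A 0 1‖ ^ 2 - ‖A 1 0‖ ^ 2) ^ 2
  have hC : 0 < C := (Complex.pos_iff.1 hA.det_pos).1
  have hR : 0 < R := by positivity
  have hA₁₁ : 0 < (A 1 1).im := by simpa [matIm_apply_self] using hA.diag_pos (i := 1)
  calc (∫ v : Fin 2 → ℝ, ((matIm ((diagonal fun i => (v i : ℂ)) - A)⁻¹).det).re)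
      = ∫ v : Fin 2 → ℝ,
          C * (Complex.normSq ((v 0 - A 0 0) * (v 1 - A 1 1) - A 0 1 * A 1 0))⁻¹ := by
        congr with v
        rw [det_matIm_inv_sub_of_isHermitian (isHermitian_diagonal_ofReal v) hA,
          Complex.div_ofReal_re, div_eq_mul_inv, det_fin_two (_ - A)]
        simp [C]
    _ = ∫ z : ℝ × ℝ,
          C * (Complex.normSq ((z.1 - A 0 0) * (z.2 - A 1 1) - A 0 1 * A 1 0))⁻¹ := by
        rw [← (volume_preserving_finTwoArrow ℝ).integral_comp
          (MeasurableEquiv.measurableEmbedding _)]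
        rfl
    _ = C * (2 * π ^ 2 / √(4 * R)) := by
        rw [integral_const_mul, integral_inv_normSq_mul_sub_sub hA₁₁ (hdisc ▸ by positivity),
          ← hdisc]
    _ = π ^ 2 * C / √R := by
        rw [Real.sqrt_mul zero_le_four, show √4 = 2 by norm_num]
        field_simp
end

section
/- Let n ≥ 0 and let A be an n×n complex matrix such that Im A is positive definite. Then the integral over (v₁,…,vₙ) ∈ ℝⁿ of det(Im[(diag(v₁,…,vₙ) − A)⁻¹]) is at most πⁿ. -/
open MeasureTheory Matrix Real ComplexOrder

/-!
Write `M = diag v - A`. Since `Im (M⁻¹) = M⁻¹ (Im A) M⁻ᴴ`, the integrand is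
`det (Im A) / |det M|²`. The Schur complement of the entry `(0, 0)` gives
`det M = det (diag v' - A') · (v₀ - s)`, where `A'` is `A` without its first row and column and
`s` depends only on `v' = (v₁, …)`. So the `v₀`-integral is a Cauchy integral, equal to
`π / Im s` times the remaining factor. For `φ = (1, (diag v' - A')⁻¹ A_{•0})` one has
`Im s = φᴴ (Im A) φ`, which is positive and, by the Schur complement of the positive definite
matrix `Im A`, at least `det (Im A) / det (Im A')`. Hence integrating out `v₀` costs at most a
factor `π` and replaces `A` by `A'`, whose imaginary part is again positive definite; induction
on `n` gives `πⁿ`.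
-/

section MatIm

variable {ι : Type*}

lemma star_dotProduct_conjTranspose_mulVec [Fintype ι] (C : Matrix ι ι ℂ) (x : ι → ℂ) :
    star x ⬝ᵥ Cᴴ *ᵥ x = star (star x ⬝ᵥ C *ᵥ x) := by
  rw [← star_dotProduct, star_mulVec, dotProduct_mulVec]

lemma star_dotProduct_matIm_mulVec [Fintype ι] (C : Matrix ι ι ℂ) (x : ι → ℂ) :
    star x ⬝ᵥ matIm C *ᵥ x = ((star x ⬝ᵥ C *ᵥ x).im : ℂ) := by
  rw [matIm, smul_mulVec, dotProduct_smul, sub_mulVec, dotProduct_sub,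
    star_dotProduct_conjTranspose_mulVec, Complex.star_def, Complex.sub_conj, smul_eq_mul]
  push_cast
  field_simp

lemma matIm_submatrix {κ : Type*} (C : Matrix ι ι ℂ) (f : κ → ι) :
    matIm (C.submatrix f f) = (matIm C).submatrix f f := by
  rw [matIm, matIm, conjTranspose_submatrix]
  rfl

lemma posDef_matIm_submatrix {κ : Type*} {C : Matrix ι ι ℂ}
    (hC : (matIm C).PosDef) {f : κ → ι} (hf : Function.Injective f) :
    (matIm (C.submatrix f f)).PosDef := by
  rw [matIm_submatrix]
  exact hC.submatrix hf

lemma matIm_diagonal_ofReal_sub [DecidableEq ι] (d : ι → ℝ) (C : Matrix ι ι ℂ) :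
    matIm (diagonal (fun i => (d i : ℂ)) - C) = -matIm C := by
  have hd : (diagonal fun i => (d i : ℂ))ᴴ = diagonal fun i => (d i : ℂ) := by
    rw [diagonal_conjTranspose]
    congr
    ext i
    simp
  rw [matIm, matIm, conjTranspose_sub, hd, ← smul_neg]
  abel_nf

lemma isUnit_det_of_posDef_neg_matIm [Fintype ι] [DecidableEq ι] {C : Matrix ι ι ℂ}
    (hC : (-matIm C).PosDef) : IsUnit C.det := by
  rw [isUnit_iff_ne_zero]
  intro h
  obtain ⟨x, hx, hCx⟩ := exists_mulVec_eq_zero_iff.2 h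
  have := hC.dotProduct_mulVec_pos hx
  rw [neg_mulVec, dotProduct_neg, star_dotProduct_matIm_mulVec, hCx] at this
  simp at this

lemma isUnit_det_diagonal_ofReal_sub [Fintype ι] [DecidableEq ι] {A : Matrix ι ι ℂ}
    (hA : (matIm A).PosDef) (d : ι → ℝ) : IsUnit (diagonal (fun i => (d i : ℂ)) - A).det :=
  isUnit_det_of_posDef_neg_matIm (by rwa [matIm_diagonal_ofReal_sub, neg_neg])

lemma matIm_nonsing_inv [Fintype ι] [DecidableEq ι] {C : Matrix ι ι ℂ} (hC : IsUnit C.det) :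
    matIm C⁻¹ = -(C⁻¹ * matIm C * C⁻¹ᴴ) := by
  have hCH : IsUnit Cᴴ.det := by
    rw [det_conjTranspose]
    exact hC.star
  have hsub : C⁻¹ - Cᴴ⁻¹ = C⁻¹ * (Cᴴ - C) * Cᴴ⁻¹ := by
    rw [Matrix.mul_sub, Matrix.sub_mul, Matrix.mul_assoc, mul_nonsing_inv _ hCH,
      Matrix.mul_one, nonsing_inv_mul _ hC, Matrix.one_mul]
  rw [matIm, matIm, conjTranspose_nonsing_inv, hsub, ← neg_sub C, Matrix.mul_neg, Matrix.neg_mul,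
    smul_neg, Matrix.mul_smul, Matrix.smul_mul]

lemma det_matIm_inv_diagonal_ofReal_sub [Fintype ι] [DecidableEq ι] {A : Matrix ι ι ℂ}
    (hA : (matIm A).PosDef) (d : ι → ℝ) :
    (matIm (diagonal (fun i => (d i : ℂ)) - A)⁻¹).det =
      (matIm A).det / Complex.normSq (diagonal (fun i => (d i : ℂ)) - A).det := by
  rw [matIm_nonsing_inv (isUnit_det_diagonal_ofReal_sub hA d), matIm_diagonal_ofReal_sub,
    Matrix.mul_neg, Matrix.neg_mul, neg_neg, det_mul, det_mul, det_conjTranspose, det_nonsing_inv,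
    ← Complex.mul_conj, Ring.inverse_eq_inv, star_inv₀, Complex.star_def]
  ring

end MatIm

def finSuccEquivSum (m : ℕ) : Fin (m + 1) ≃ Fin m ⊕ PUnit.{1} :=
  (finSuccEquiv m).trans (Equiv.optionEquivSumPUnit (Fin m))

namespace Matrix

variable {R : Type*} {m : ℕ}

lemma submatrix_finSuccEquivSum_symm (C : Matrix (Fin (m + 1)) (Fin (m + 1)) R) :
    C.submatrix (finSuccEquivSum m).symm (finSuccEquivSum m).symm =
      fromBlocks (C.submatrix Fin.succ Fin.succ) (replicateCol PUnit fun i => C i.succ 0)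
        (replicateRow PUnit fun j => C 0 j.succ) (of fun _ _ => C 0 0) := by
  ext (i | i) (j | j) <;> simp [finSuccEquivSum]

lemma dotProduct_mulVec_submatrix_equiv [CommSemiring R] [StarRing R] {ι κ : Type*} [Fintype ι]
    [Fintype κ] (K : Matrix ι ι R) (e : κ ≃ ι) (x : ι → R) :
    star (x ∘ e) ⬝ᵥ K.submatrix e e *ᵥ (x ∘ e) = star x ⬝ᵥ K *ᵥ x := by
  rw [submatrix_mulVec_equiv, Function.comp_assoc, e.self_comp_symm, Function.comp_id]
  exact comp_equiv_dotProduct_comp_equiv (star x) (K *ᵥ x) e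

lemma det_eq_det_submatrix_succ_mul [CommRing R] (C : Matrix (Fin (m + 1)) (Fin (m + 1)) R)
    (h : IsUnit (C.submatrix Fin.succ Fin.succ).det) :
    C.det = (C.submatrix Fin.succ Fin.succ).det *
      (C 0 0 - (fun j => C 0 j.succ) ⬝ᵥ
        (C.submatrix Fin.succ Fin.succ)⁻¹ *ᵥ fun i => C i.succ 0) := by
  have := invertibleOfIsUnitDet _ h
  rw [← det_submatrix_equiv_self (finSuccEquivSum m).symm, submatrix_finSuccEquivSum_symm,
    det_fromBlocks₁₁, det_unique (n := PUnit), invOf_eq_nonsing_inv]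
  rw [Matrix.mul_assoc, ← replicateCol_mulVec]
  rfl

lemma IsHermitian.star_cons_one_dotProduct_mulVec [CommRing R] [StarRing R]
    {K : Matrix (Fin (m + 1)) (Fin (m + 1)) R} (hK : K.IsHermitian)
    (h : IsUnit (K.submatrix Fin.succ Fin.succ).det) (y : Fin m → R) :
    star (Fin.cons 1 y : Fin (m + 1) → R) ⬝ᵥ K *ᵥ Fin.cons 1 y =
      (K 0 0 - (fun j => K 0 j.succ) ⬝ᵥ (K.submatrix Fin.succ Fin.succ)⁻¹ *ᵥ fun i => K i.succ 0) +
      star (y + (K.submatrix Fin.succ Fin.succ)⁻¹ *ᵥ fun i => K i.succ 0) ⬝ᵥ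
        K.submatrix Fin.succ Fin.succ *ᵥ
          (y + (K.submatrix Fin.succ Fin.succ)⁻¹ *ᵥ fun i => K i.succ 0) := by
  have := invertibleOfIsUnitDet _ h
  have hrow : (fun j : Fin m => K 0 j.succ) = star fun i : Fin m => K i.succ 0 := by
    ext j
    simp [← hK.apply 0 j.succ]
  have hvec : (Fin.cons 1 y : Fin (m + 1) → R) ∘ (finSuccEquivSum m).symm = Sum.elim y 1 := by
    ext (i | i) <;> simp [finSuccEquivSum]
  have hcol : (replicateCol PUnit.{1} fun i : Fin m => K i.succ 0) *ᵥ 1 = fun i => K i.succ 0 := by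
    ext i
    simp [mulVec, dotProduct]
  rw [← dotProduct_mulVec_submatrix_equiv K (finSuccEquivSum m).symm,
    submatrix_finSuccEquivSum_symm, hvec, hrow, ← conjTranspose_replicateCol, dotProduct_mulVec,
    schur_complement_eq₁₁ _ _ _ _ (hK.submatrix _), add_comm, ← mulVec_mulVec, hcol]
  congr 1
  · rw [Matrix.mul_assoc, ← replicateCol_mulVec, conjTranspose_replicateCol,
      replicateRow_mul_replicateCol]
    simp [vecMul, dotProduct]
  · rw [dotProduct_mulVec]

/-- The Schur complement of the entry `(0, 0)` is the minimum of the quadratic form on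
vectors with first coordinate `1`. -/
theorem PosDef.det_le_dotProduct_mulVec_cons_one_mul_det_submatrix_succ
    {K : Matrix (Fin (m + 1)) (Fin (m + 1)) ℂ} (hK : K.PosDef) (y : Fin m → ℂ) :
    K.det ≤ (star (Fin.cons 1 y : Fin (m + 1) → ℂ) ⬝ᵥ K *ᵥ Fin.cons 1 y) *
      (K.submatrix Fin.succ Fin.succ).det := by
  have hK' := hK.submatrix (Fin.succ_injective m)
  have hdet := hK'.det_pos
  rw [det_eq_det_submatrix_succ_mul K hdet.ne'.isUnit,
    hK.isHermitian.star_cons_one_dotProduct_mulVec hdet.ne'.isUnit, mul_comm]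
  gcongr
  exact le_add_of_nonneg_right (hK'.posSemidef.dotProduct_mulVec_nonneg _)

lemma mulVec_fin_cons [NonUnitalNonAssocSemiring R] (C : Matrix (Fin (m + 1)) (Fin (m + 1)) R)
    (a : R) (y : Fin m → R) :
    C *ᵥ Fin.cons a y = Fin.cons (C 0 0 * a + (fun j => C 0 j.succ) ⬝ᵥ y)
      (fun i => C i.succ 0 * a + (C.submatrix Fin.succ Fin.succ *ᵥ y) i) := by
  ext i
  cases i using Fin.cases <;> simp [mulVec, dotProduct, Fin.sum_univ_succ]

end Matrix

open ProbabilityTheory in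
lemma lintegral_ofReal_div_normSq_ofReal_sub {s : ℂ} (hs : 0 < s.im) {c : ℝ} (hc : 0 ≤ c) :
    ∫⁻ t : ℝ, ENNReal.ofReal (c / Complex.normSq (t - s)) = ENNReal.ofReal (c * π / s.im) := by
  have hpdf (t : ℝ) :
      c / Complex.normSq (t - s) = c * π / s.im * cauchyPDFReal s.re s.im.toNNReal t := by
    have hnormSq : Complex.normSq (t - s) = (t - s.re) ^ 2 + s.im ^ 2 := by
      rw [Complex.normSq_apply]
      simp only [Complex.sub_re, Complex.ofReal_re, Complex.sub_im, Complex.ofReal_im]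
      ring
    have : 0 < (t - s.re) ^ 2 + s.im ^ 2 := by positivity
    rw [cauchyPDFReal_def, hnormSq, Real.coe_toNNReal _ hs.le]
    field_simp
  have hpdf_one : ∫⁻ t, ENNReal.ofReal (cauchyPDFReal s.re s.im.toNNReal t) = 1 :=
    lintegral_cauchyPDF_eq_one s.re (by simpa using hs)
  simp_rw [hpdf, ENNReal.ofReal_mul (by positivity : 0 ≤ c * π / s.im)]
  rw [lintegral_const_mul' _ _ ENNReal.ofReal_ne_top, hpdf_one, mul_one]

lemma lintegral_fin_cons {α : Type*} [MeasureSpace α] [SigmaFinite (volume : Measure α)] {n : ℕ}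
    {f : (Fin (n + 1) → α) → ENNReal} (hf : Measurable f) :
    ∫⁻ v, f v = ∫⁻ v', ∫⁻ t, f (Fin.cons t v') := by
  rw [← (volume_preserving_piFinSuccAbove (fun _ : Fin (n + 1) => α) 0).symm.lintegral_comp hf,
    Measure.volume_eq_prod, lintegral_prod_symm]
  · simp [MeasurableEquiv.piFinSuccAbove_symm_apply, Fin.consEquiv]
  · exact (hf.comp (MeasurableEquiv.measurable _)).aemeasurable

section DetImResolvent

variable {ι : Type*} [Fintype ι] [DecidableEq ι]

/-- The closed form of `det (Im (diag v - A)⁻¹)`, see `re_det_matIm_inv_diagonal_ofReal_sub`. -/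
noncomputable def detImResolvent (A : Matrix ι ι ℂ) (v : ι → ℝ) : ℝ :=
  (matIm A).det.re / Complex.normSq (diagonal (fun i => (v i : ℂ)) - A).det

lemma re_det_matIm_inv_diagonal_ofReal_sub {A : Matrix ι ι ℂ} (hA : (matIm A).PosDef)
    (v : ι → ℝ) :
    (matIm (diagonal (fun i => (v i : ℂ)) - A)⁻¹).det.re = detImResolvent A v := by
  rw [det_matIm_inv_diagonal_ofReal_sub hA, Complex.div_ofReal_re, detImResolvent]

lemma detImResolvent_nonneg {A : Matrix ι ι ℂ} (hA : (matIm A).PosDef) (v : ι → ℝ) :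
    0 ≤ detImResolvent A v :=
  div_nonneg (Complex.nonneg_iff.1 hA.det_pos.le).1 (Complex.normSq_nonneg _)

lemma measurable_detImResolvent (A : Matrix ι ι ℂ) : Measurable (detImResolvent A) :=
  measurable_const.div (Complex.continuous_normSq.comp (by fun_prop)).measurable

end DetImResolvent

section DetRoot

variable {m : ℕ} {A : Matrix (Fin (m + 1)) (Fin (m + 1)) ℂ}

/-- The zero of `t ↦ det (diag (Fin.cons t v) - A)`, see `det_diagonal_cons_sub`. -/
noncomputable def detRoot (A : Matrix (Fin (m + 1)) (Fin (m + 1)) ℂ) (v : Fin m → ℝ) : ℂ :=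
  A 0 0 + (fun j => A 0 j.succ) ⬝ᵥ
    (diagonal (fun i => (v i : ℂ)) - A.submatrix Fin.succ Fin.succ)⁻¹ *ᵥ fun i => A i.succ 0

lemma submatrix_succ_diagonal_cons_sub (t : ℝ) (v : Fin m → ℝ) :
    (diagonal (fun i => ((Fin.cons t v : Fin (m + 1) → ℝ) i : ℂ)) - A).submatrix
        Fin.succ Fin.succ =
      diagonal (fun i => (v i : ℂ)) - A.submatrix Fin.succ Fin.succ := by
  ext i j
  simp [diagonal_apply]

lemma det_diagonal_cons_sub (hA : (matIm A).PosDef) (t : ℝ) (v : Fin m → ℝ) :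
    (diagonal (fun i => ((Fin.cons t v : Fin (m + 1) → ℝ) i : ℂ)) - A).det =
      (diagonal (fun i => (v i : ℂ)) - A.submatrix Fin.succ Fin.succ).det * (t - detRoot A v) := by
  have hN := isUnit_det_diagonal_ofReal_sub (posDef_matIm_submatrix hA (Fin.succ_injective m)) v
  rw [det_eq_det_submatrix_succ_mul _ (by rwa [submatrix_succ_diagonal_cons_sub]),
    submatrix_succ_diagonal_cons_sub, detRoot]
  congr 1
  simp [dotProduct, mulVec, (Fin.succ_ne_zero _).symm, sub_sub]

lemma exists_dotProduct_matIm_mulVec_cons_eq_im_detRoot (hA : (matIm A).PosDef)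
    (v : Fin m → ℝ) :
    ∃ y : Fin m → ℂ, star (Fin.cons 1 y : Fin (m + 1) → ℂ) ⬝ᵥ matIm A *ᵥ Fin.cons 1 y =
      ((detRoot A v).im : ℂ) := by
  set N := diagonal (fun i => (v i : ℂ)) - A.submatrix Fin.succ Fin.succ
  have hN : IsUnit N.det :=
    isUnit_det_diagonal_ofReal_sub (posDef_matIm_submatrix hA (Fin.succ_injective m)) v
  set C := diagonal (fun i => ((Fin.cons 0 v : Fin (m + 1) → ℝ) i : ℂ)) - A
  set y := N⁻¹ *ᵥ fun i => A i.succ 0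
  have hCy : C *ᵥ Fin.cons 1 y = Fin.cons (-detRoot A v) 0 := by
    rw [mulVec_fin_cons, submatrix_succ_diagonal_cons_sub, mulVec_mulVec, mul_nonsing_inv _ hN,
      one_mulVec]
    congr 1
    · simp [C, detRoot, y, N, diagonal_apply, dotProduct, add_comm]
    · ext i
      simp [C]
  have hq : star (Fin.cons 1 y : Fin (m + 1) → ℂ) ⬝ᵥ Fin.cons (-detRoot A v) 0 = -detRoot A v := by
    simp [dotProduct, Fin.sum_univ_succ]
  refine ⟨y, neg_injective ?_⟩
  have := star_dotProduct_matIm_mulVec C (Fin.cons 1 y)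
  rwa [matIm_diagonal_ofReal_sub, hCy, neg_mulVec, dotProduct_neg, hq, Complex.neg_im,
    Complex.ofReal_neg] at this

lemma im_detRoot_pos (hA : (matIm A).PosDef) (v : Fin m → ℝ) : 0 < (detRoot A v).im := by
  obtain ⟨y, hy⟩ := exists_dotProduct_matIm_mulVec_cons_eq_im_detRoot hA v
  have := hA.dotProduct_mulVec_pos (x := Fin.cons 1 y) (by simp [funext_iff, Fin.forall_fin_succ])
  rwa [hy, Complex.zero_lt_real] at this

lemma re_det_matIm_le_im_detRoot_mul (hA : (matIm A).PosDef) (v : Fin m → ℝ) :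
    (matIm A).det.re ≤ (detRoot A v).im * (matIm (A.submatrix Fin.succ Fin.succ)).det.re := by
  obtain ⟨y, hy⟩ := exists_dotProduct_matIm_mulVec_cons_eq_im_detRoot hA v
  have h := hA.det_le_dotProduct_mulVec_cons_one_mul_det_submatrix_succ y
  rw [hy, ← matIm_submatrix] at h
  simpa using (Complex.le_def.1 h).1

lemma lintegral_detImResolvent_cons_le (hA : (matIm A).PosDef) (v : Fin m → ℝ) :
    ∫⁻ t : ℝ, ENNReal.ofReal (detImResolvent A (Fin.cons t v)) ≤
      ENNReal.ofReal π * ENNReal.ofReal (detImResolvent (A.submatrix Fin.succ Fin.succ) v) := by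
  have hN :
      0 < Complex.normSq (diagonal (fun i => (v i : ℂ)) - A.submatrix Fin.succ Fin.succ).det :=
    Complex.normSq_pos.2
    (isUnit_det_diagonal_ofReal_sub (posDef_matIm_submatrix hA (Fin.succ_injective m)) v).ne_zero
  have hs := im_detRoot_pos hA v
  have hK : 0 ≤ (matIm A).det.re := (Complex.nonneg_iff.1 hA.det_pos.le).1
  simp_rw [detImResolvent, det_diagonal_cons_sub hA, Complex.normSq_mul, ← div_div]
  rw [lintegral_ofReal_div_normSq_ofReal_sub hs (by positivity), ← ENNReal.ofReal_mul pi_pos.le]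
  gcongr ENNReal.ofReal ?_
  rw [div_mul_eq_mul_div, div_le_iff₀ hs, div_le_iff₀ hN]
  convert mul_le_mul_of_nonneg_right (re_det_matIm_le_im_detRoot_mul hA v) pi_pos.le using 1
  field_simp

end DetRoot

lemma lintegral_detImResolvent_le :
    ∀ {n : ℕ} {A : Matrix (Fin n) (Fin n) ℂ}, (matIm A).PosDef →
      ∫⁻ v, ENNReal.ofReal (detImResolvent A v) ≤ ENNReal.ofReal π ^ n
  | 0, A, _ => by simp [volume_pi, detImResolvent]
  | n + 1, A, hA => by
    rw [lintegral_fin_cons (measurable_detImResolvent A).ennreal_ofReal]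
    calc _ ≤ ∫⁻ v, ENNReal.ofReal π *
            ENNReal.ofReal (detImResolvent (A.submatrix Fin.succ Fin.succ) v) :=
          lintegral_mono fun v => lintegral_detImResolvent_cons_le hA v
      _ ≤ ENNReal.ofReal π * ENNReal.ofReal π ^ n := by
          rw [lintegral_const_mul' _ _ ENNReal.ofReal_ne_top]
          gcongr
          exact lintegral_detImResolvent_le (posDef_matIm_submatrix hA (Fin.succ_injective n))
      _ = ENNReal.ofReal π ^ (n + 1) := (pow_succ' _ _).symm

theorem integral_det_im_inv_le (n : ℕ)
    (A : Matrix (Fin n) (Fin n) ℂ) (hA : (matIm A).PosDef) :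
    (∫ v : Fin n → ℝ,
        ((matIm ((Matrix.diagonal (fun i => (v i : ℂ)) - A)⁻¹)).det).re)
      ≤ π ^ n := by
  simp_rw [re_det_matIm_inv_diagonal_ofReal_sub hA]
  rw [integral_eq_lintegral_of_nonneg_ae (ae_of_all _ (detImResolvent_nonneg hA))
    (measurable_detImResolvent A).aestronglyMeasurable]
  exact ENNReal.toReal_le_of_le_ofReal (by positivity)
    ((lintegral_detImResolvent_le hA).trans_eq (ENNReal.ofReal_pow pi_pos.le n).symm)
end

section
/- Let C be an n×n Hermitian positive definite complex matrix (n ≥ 1), let c_{nn} be its last diagonal entry, and let Ĉ be the (n−1)×(n−1) principal submatrix obtained by deleting the last row and column. Then det C ≤ c_{nn} · det Ĉ. -/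
open Matrix ComplexOrder

/-!
Bordering: with `C = [[Ĉ, b], [bᴴ, c]]`, the Schur complement formula gives
`det C = det Ĉ * (c - bᴴ Ĉ⁻¹ b)`, and `bᴴ Ĉ⁻¹ b ≥ 0` because `Ĉ⁻¹` is positive definite.
-/

namespace Matrix

variable {m 𝕜 : Type*} [Fintype m] [DecidableEq m] [RCLike 𝕜]

theorem PosDef.det_fromBlocks_le {A : Matrix m m 𝕜} (hA : A.PosDef) (B : Matrix m (Fin 1) 𝕜)
    (D : Matrix (Fin 1) (Fin 1) 𝕜) : (fromBlocks A B Bᴴ D).det ≤ A.det * D 0 0 := by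
  let := hA.isUnit.invertible
  have hcorr : 0 ≤ (Bᴴ * A⁻¹ * B) 0 0 :=
    (hA.inv.posSemidef.conjTranspose_mul_mul_same B).diag_nonneg
  rw [det_fromBlocks₁₁, det_fin_one, sub_apply, mul_sub, invOf_eq_nonsing_inv]
  exact sub_le_self _ (mul_nonneg hA.det_pos.le hcorr)

theorem IsHermitian.submatrix_finSumFinEquiv {n : ℕ} {C : Matrix (Fin (n + 1)) (Fin (n + 1)) 𝕜}
    (hC : C.IsHermitian) :
    C.submatrix finSumFinEquiv finSumFinEquiv =
      Matrix.fromBlocks (C.submatrix Fin.castSucc Fin.castSucc)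
        (of fun i _ ↦ C (Fin.castSucc i) (Fin.last n))
        (of fun i _ ↦ C (Fin.castSucc i) (Fin.last n))ᴴ
        (of fun _ _ ↦ C (Fin.last n) (Fin.last n)) := by
  ext (i | i) (j | j)
  · rfl
  · rw [Fin.fin_one_eq_zero j]; rfl
  · rw [Fin.fin_one_eq_zero i]; exact (hC.apply _ _).symm
  · rw [Fin.fin_one_eq_zero i, Fin.fin_one_eq_zero j]; rfl

theorem PosDef.det_le_entry_mul_det_submatrix {n : ℕ} {C : Matrix (Fin (n + 1)) (Fin (n + 1)) 𝕜}
    (hC : C.PosDef) :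
    C.det ≤ C (Fin.last n) (Fin.last n) * (C.submatrix Fin.castSucc Fin.castSucc).det := by
  rw [← det_submatrix_equiv_self finSumFinEquiv, hC.isHermitian.submatrix_finSumFinEquiv, mul_comm]
  exact (hC.submatrix (Fin.castSucc_injective n)).det_fromBlocks_le _ _

end Matrix

theorem det_le_entry_mul_det_submatrix (n : ℕ)
    (C : Matrix (Fin (n + 1)) (Fin (n + 1)) ℂ) (hC : C.PosDef) :
    C.det.re ≤ (C (Fin.last n) (Fin.last n)).re *
      (C.submatrix Fin.castSucc Fin.castSucc).det.re := by
  have hdet_im := (Complex.lt_def.mp (hC.submatrix (Fin.castSucc_injective n)).det_pos).2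
  have h := (Complex.le_def.mp hC.det_le_entry_mul_det_submatrix).1
  rwa [Complex.mul_re, ← hdet_im, Complex.zero_im, mul_zero, sub_zero] at h
end

section
/- Let A be an invertible n×n complex matrix (n ≥ 1) with Im A positive definite, and let v be a real number. Then det(Im[(diag(0,…,0,v) − A)⁻¹]) = det(Im(−A⁻¹)) / |1 − v·(A⁻¹)_{nn}|², where diag(0,…,0,v) is the diagonal matrix whose only possibly nonzero entry is v in position (n,n) and (A⁻¹)_{nn} is the last diagonal entry of A⁻¹. -/
/-! For invertible `C`, `Im (C⁻¹) = -C⁻¹ (Im C) C⁻ᴴ`, hence `det Im (-C⁻¹) = det (Im C) / |det C|²`.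
With `D = diag(0,…,0,v)` Hermitian, `Im (A - D) = Im A > 0`, so
`A - D` is invertible, and by the matrix determinant lemma `det (A - D) = det A · (1 - v (A⁻¹)ₙₙ)`. -/

open MeasureTheory Matrix Real ComplexOrder

section MatIm

variable {m : Type*}

lemma matIm_neg (C : Matrix m m ℂ) : matIm (-C) = -matIm C := by
  simp only [matIm, conjTranspose_neg, ← smul_neg, neg_sub, neg_sub_neg]

lemma matIm_sub (C E : Matrix m m ℂ) : matIm (C - E) = matIm C - matIm E := by
  simp only [matIm, conjTranspose_sub, ← smul_sub]
  abel_nf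

lemma Matrix.IsHermitian.matIm_eq_zero {D : Matrix m m ℂ} (hD : D.IsHermitian) : matIm D = 0 := by
  rw [matIm, hD.eq, sub_self, smul_zero]

variable [Fintype m] [DecidableEq m]

/-- If `C x = 0` then `xᴴ (Im C) x = 0`. -/
lemma isUnit_of_posDef_matIm {C : Matrix m m ℂ} (h : (matIm C).PosDef) : IsUnit C := by
  rw [isUnit_iff_isUnit_det, isUnit_iff_ne_zero]
  intro hdet
  obtain ⟨x, hx, hCx⟩ := exists_mulVec_eq_zero_iff.2 hdet
  have hCHx : star x ⬝ᵥ (Cᴴ *ᵥ x) = 0 := by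
    rw [dotProduct_mulVec, ← star_mulVec, hCx, star_zero, zero_dotProduct]
  have hImx : star x ⬝ᵥ (matIm C *ᵥ x) = 0 := by
    rw [matIm, smul_mulVec, sub_mulVec, dotProduct_smul, dotProduct_sub, hCx, hCHx,
      dotProduct_zero, sub_zero, smul_zero]
  exact (h.dotProduct_mulVec_pos hx).ne' hImx

lemma matIm_inv_s15 {C : Matrix m m ℂ} (hC : IsUnit C) :
    matIm C⁻¹ = -(C⁻¹ * matIm C * C⁻¹ᴴ) := by
  have hdet : IsUnit C.det := (isUnit_iff_isUnit_det C).mp hC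
  have hdetH : IsUnit Cᴴ.det := by rw [det_conjTranspose]; exact hdet.star
  have hsandwich : C⁻¹ * (C - Cᴴ) * C⁻¹ᴴ = C⁻¹ᴴ - C⁻¹ := by
    rw [conjTranspose_nonsing_inv, Matrix.mul_sub, Matrix.sub_mul, nonsing_inv_mul C hdet,
      Matrix.one_mul, Matrix.mul_assoc, mul_nonsing_inv Cᴴ hdetH, Matrix.mul_one]
  rw [matIm, matIm, Matrix.mul_smul, Matrix.smul_mul, hsandwich, ← smul_neg, neg_sub]

lemma matIm_neg_inv {C : Matrix m m ℂ} (hC : IsUnit C) :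
    matIm (-C⁻¹) = C⁻¹ * matIm C * C⁻¹ᴴ := by
  rw [matIm_neg, matIm_inv_s15 hC, neg_neg]

lemma det_inv_mul_mul_conjTranspose_inv (C M : Matrix m m ℂ) :
    (C⁻¹ * M * C⁻¹ᴴ).det = M.det / ((‖C.det‖ : ℝ) : ℂ) ^ 2 := by
  rw [det_mul, det_mul, det_conjTranspose, det_nonsing_inv, Ring.inverse_eq_inv', star_inv₀,
    ← Complex.mul_conj', Complex.star_def]
  field_simp

end MatIm

lemma Matrix.inv_neg {m α : Type*} [Fintype m] [DecidableEq m] [CommRing α]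
    (A : Matrix m m α) : (-A)⁻¹ = -A⁻¹ := by
  by_cases hA : IsUnit A.det
  · exact inv_eq_left_inv (by rw [neg_mul_neg, nonsing_inv_mul A hA])
  · have hnegA : ¬IsUnit (-A).det := by
      rwa [← isUnit_iff_isUnit_det, IsUnit.neg_iff, isUnit_iff_isUnit_det]
    rw [nonsing_inv_apply_not_isUnit A hA, nonsing_inv_apply_not_isUnit (-A) hnegA, neg_zero]

lemma Matrix.det_sub_single_self {m α : Type*} [Fintype m] [DecidableEq m] [CommRing α]
    {A : Matrix m m α} (hA : IsUnit A.det) (i : m) (x : α) :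
    (A - single i i x).det = A.det * (1 - x * A⁻¹ i i) := by
  have hsingle : -single i i x
      = replicateCol Unit (Pi.single i (-x)) * replicateRow Unit (Pi.single i (1 : α)) := by
    rw [← vecMulVec_eq]
    ext j k
    by_cases hj : j = i <;> by_cases hk : k = i <;> simp [vecMulVec_apply, hj, hk, Ne.symm]
  rw [sub_eq_add_neg, hsingle, det_add_replicateCol_mul_replicateRow hA, det_unique (1 + _)]
  simp [mul_apply, Pi.single_apply, sub_eq_add_neg, mul_comm]

theorem det_matIm_inv_single_diag_general (n : ℕ)
    (A : Matrix (Fin (n + 1)) (Fin (n + 1)) ℂ)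
    (hA : (matIm A).PosDef) (v : ℝ) :
    (matIm ((Matrix.diagonal (fun i => if i = Fin.last n then (v : ℂ) else 0) - A)⁻¹)).det
      = (matIm (-(A⁻¹))).det /
        (((‖(1 - v * (A⁻¹ (Fin.last n) (Fin.last n)) : ℂ)‖ : ℝ) : ℂ) ^ 2) := by
  have hD : diagonal (fun i => if i = Fin.last n then (v : ℂ) else 0)
      = single (Fin.last n) (Fin.last n) (v : ℂ) := by
    rw [← diagonal_single]
    congr 1
    ext i
    rw [Pi.single_apply]
  rw [hD]
  set D := single (Fin.last n) (Fin.last n) (v : ℂ)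
  have hDherm : D.IsHermitian := by
    rw [IsHermitian, conjTranspose_single, Complex.star_def, Complex.conj_ofReal]
  have hImAD : matIm (A - D) = matIm A := by
    rw [matIm_sub, hDherm.matIm_eq_zero, sub_zero]
  have hADunit : IsUnit (A - D) := isUnit_of_posDef_matIm (hImAD ▸ hA)
  have hAunit : IsUnit A := isUnit_of_posDef_matIm hA
  have hdet : ‖(A - D).det‖ = ‖A.det‖ * ‖1 - v * A⁻¹ (Fin.last n) (Fin.last n)‖ := by
    rw [det_sub_single_self ((isUnit_iff_isUnit_det A).mp hAunit), norm_mul]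
  rw [← neg_sub, Matrix.inv_neg, matIm_neg_inv hADunit, matIm_neg_inv hAunit, hImAD,
    det_inv_mul_mul_conjTranspose_inv, det_inv_mul_mul_conjTranspose_inv, hdet, Complex.ofReal_mul,
    mul_pow, div_div]

theorem det_matIm_inv_single_diag (n : ℕ)
    (A : Matrix (Fin (n + 1)) (Fin (n + 1)) ℂ) (hinv : IsUnit A)
    (hA : (matIm A).PosDef) (v : ℝ) :
    (matIm ((Matrix.diagonal (fun i => if i = Fin.last n then (v : ℂ) else 0) - A)⁻¹)).det
      = (matIm (-(A⁻¹))).det /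
        (((‖(1 - v * (A⁻¹ (Fin.last n) (Fin.last n)) : ℂ)‖ : ℝ) : ℂ) ^ 2) :=
  det_matIm_inv_single_diag_general n A hA v
end
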